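/- The trapezium T = {(−1,1), (1,1), (−2,0), (2,0)} and kite K = {(−2,0), (−1,1), (−1,−1), (2,0)} in ℝ² have equal multisets of pairwise distances {2, √2, √2, √10, √10, 4} but are not isometric; in particular AMD₁(T) = √2 while AMD₁(K) = (3√2 + √10)/4. -/

import Mathlib

/-! All distances are square roots of integers read off from the coordinates. An isometry
preserves nearest-neighbour distances, so it cannot map `T` onto `K`: every point of `T` has its
nearest neighbour at distance `√2`, whereas the vertex `(2,0)` of `K` has it at distance `√10`. -/

open Metric Set

/-- The `k`-th nearest neighbour distance from `p` to the set `X` (excluding `p` itself). -/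
noncomputable def kthNNDist {E : Type*} [MetricSpace E] (X : Set E) (p : E) (k : ℕ) : ℝ :=
  sInf {r : ℝ | k ≤ Nat.card ↥((X \ {p}) ∩ Metric.closedBall p r)}

noncomputable def pt (x y : ℝ) : EuclideanSpace ℝ (Fin 2) := WithLp.toLp 2 ![x, y]

/-- The trapezium `T = {(−1,1), (1,1), (−2,0), (2,0)}`. -/
noncomputable def Tset : Set (EuclideanSpace ℝ (Fin 2)) :=
  {pt (-1) 1, pt 1 1, pt (-2) 0, pt 2 0}

/-- The kite `K = {(−2,0), (−1,1), (−1,−1), (2,0)}`. -/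
noncomputable def Kset : Set (EuclideanSpace ℝ (Fin 2)) :=
  {pt (-2) 0, pt (-1) 1, pt (-1) (-1), pt 2 0}

lemma dist_pt (a b c d : ℝ) : dist (pt a b) (pt c d) = √((a - c) ^ 2 + (b - d) ^ 2) := by
  simp [EuclideanSpace.dist_eq, pt, Real.dist_eq, sq_abs]

@[simp] lemma pt_inj {a b c d : ℝ} : pt a b = pt c d ↔ a = c ∧ b = d := by
  simp [pt]

lemma Isometry.kthNNDist_image {E F : Type*} [MetricSpace E] [MetricSpace F] {f : E → F}
    (hf : Isometry f) (X : Set E) (p : E) (k : ℕ) :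
    kthNNDist (f '' X) (f p) k = kthNNDist X p k := by
  have hball r : (f '' X \ {f p}) ∩ closedBall (f p) r = f '' ((X \ {p}) ∩ closedBall p r) := by
    rw [← image_singleton, ← image_sdiff hf.injective, ← hf.preimage_closedBall,
      image_inter_preimage]
  simp only [kthNNDist, hball, Nat.card_image_of_injective hf.injective]

lemma kthNNDist_one_eq_dist_of_forall_le {E : Type*} [MetricSpace E] {X : Set E}
    (hX : X.Finite) {p q : E} (hq : q ∈ X) (hqp : q ≠ p)
    (hmin : ∀ x ∈ X, x ≠ p → dist q p ≤ dist x p) :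
    kthNNDist X p 1 = dist q p := by
  have hset : {r : ℝ | 1 ≤ Nat.card ↥((X \ {p}) ∩ closedBall p r)} = Ici (dist q p) := by
    ext r
    have : Finite ↥((X \ {p}) ∩ closedBall p r) := (hX.sdiff.inter_of_left _).to_subtype
    simp only [mem_ofPred_eq, mem_Ici, Nat.one_le_iff_ne_zero, Nat.card_ne_zero,
      nonempty_subtype, and_iff_left this]
    constructor
    · rintro ⟨x, ⟨hxX, hxp⟩, hxr⟩
      exact (hmin x hxX hxp).trans (mem_closedBall.1 hxr)
    · exact fun h => ⟨q, ⟨hq, hqp⟩, mem_closedBall.2 h⟩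
  rw [kthNNDist, hset, csInf_Ici]

lemma kthNNDist_one_Tset : ∀ p ∈ Tset, kthNNDist Tset p 1 = √2 := by
  simp only [Tset, forall_mem_insert, mem_singleton_iff, forall_eq]
  refine ⟨(kthNNDist_one_eq_dist_of_forall_le (toFinite _) (q := pt (-2) 0) ?_ ?_ ?_).trans ?_,
    (kthNNDist_one_eq_dist_of_forall_le (toFinite _) (q := pt 2 0) ?_ ?_ ?_).trans ?_,
    (kthNNDist_one_eq_dist_of_forall_le (toFinite _) (q := pt (-1) 1) ?_ ?_ ?_).trans ?_,
    (kthNNDist_one_eq_dist_of_forall_le (toFinite _) (q := pt 1 1) ?_ ?_ ?_).trans ?_⟩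
  all_goals norm_num [dist_pt, Real.sqrt_le_iff]

lemma kthNNDist_one_Kset :
    kthNNDist Kset (pt (-2) 0) 1 = √2 ∧ kthNNDist Kset (pt (-1) 1) 1 = √2 ∧
      kthNNDist Kset (pt (-1) (-1)) 1 = √2 ∧ kthNNDist Kset (pt 2 0) 1 = √10 := by
  unfold Kset
  refine ⟨(kthNNDist_one_eq_dist_of_forall_le (toFinite _) (q := pt (-1) 1) ?_ ?_ ?_).trans ?_,
    (kthNNDist_one_eq_dist_of_forall_le (toFinite _) (q := pt (-2) 0) ?_ ?_ ?_).trans ?_,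
    (kthNNDist_one_eq_dist_of_forall_le (toFinite _) (q := pt (-2) 0) ?_ ?_ ?_).trans ?_,
    (kthNNDist_one_eq_dist_of_forall_le (toFinite _) (q := pt (-1) 1) ?_ ?_ ?_).trans ?_⟩
  all_goals norm_num [dist_pt, Real.sqrt_le_iff]

/-- The trapezium `T` and the kite `K` have the same multiset of six pairwise distances
`{2, √2, √2, √10, √10, 4}` but are not isometric; in particular `AMD₁(T) = √2` while
`AMD₁(K) = (3√2 + √10)/4`, where `AMD₁` averages nearest-neighbour distances. -/
theorem trapezium_kite :
    ({dist (pt (-1) 1) (pt 1 1), dist (pt (-1) 1) (pt (-2) 0), dist (pt (-1) 1) (pt 2 0),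
      dist (pt 1 1) (pt (-2) 0), dist (pt 1 1) (pt 2 0), dist (pt (-2) 0) (pt 2 0)} :
        Multiset ℝ) =
      ({2, Real.sqrt 2, Real.sqrt 2, Real.sqrt 10, Real.sqrt 10, 4} : Multiset ℝ) ∧
    ({dist (pt (-2) 0) (pt (-1) 1), dist (pt (-2) 0) (pt (-1) (-1)), dist (pt (-2) 0) (pt 2 0),
      dist (pt (-1) 1) (pt (-1) (-1)), dist (pt (-1) 1) (pt 2 0), dist (pt (-1) (-1)) (pt 2 0)} :
        Multiset ℝ) =
      ({2, Real.sqrt 2, Real.sqrt 2, Real.sqrt 10, Real.sqrt 10, 4} : Multiset ℝ) ∧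
    (¬ ∃ f : EuclideanSpace ℝ (Fin 2) → EuclideanSpace ℝ (Fin 2),
      Isometry f ∧ f '' Tset = Kset) ∧
    (kthNNDist Tset (pt (-1) 1) 1 + kthNNDist Tset (pt 1 1) 1 +
      kthNNDist Tset (pt (-2) 0) 1 + kthNNDist Tset (pt 2 0) 1) / 4 = Real.sqrt 2 ∧
    (kthNNDist Kset (pt (-2) 0) 1 + kthNNDist Kset (pt (-1) 1) 1 +
      kthNNDist Kset (pt (-1) (-1)) 1 + kthNNDist Kset (pt 2 0) 1) / 4 =
      (3 * Real.sqrt 2 + Real.sqrt 10) / 4 := by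
  obtain ⟨hK₁, hK₂, hK₃, hK₄⟩ := kthNNDist_one_Kset
  have hT := kthNNDist_one_Tset
  refine ⟨?_, ?_, ?_, ?_, ?_⟩
  · norm_num [dist_pt]
    ext
    simp only [Multiset.count_cons, Multiset.count_singleton]
    ring
  · norm_num [dist_pt]
    ext
    simp only [Multiset.count_cons, Multiset.count_singleton]
    ring
  · rintro ⟨f, hf, hfT⟩
    obtain ⟨p, hp, hfp⟩ : pt 2 0 ∈ f '' Tset := hfT ▸ by simp [Kset]
    have h := hf.kthNNDist_image Tset p 1
    rw [hfT, hfp, hK₄, hT p hp] at h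
    norm_num at h
  · rw [hT _ (by simp [Tset]), hT _ (by simp [Tset]), hT _ (by simp [Tset]),
      hT _ (by simp [Tset])]
    ring
  · rw [hK₁, hK₂, hK₃, hK₄]
    ring
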